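/- For every positive integer k and every complex number q with |q| < 1 (with the relevant denominators nonzero), the rational function Wbar_k defined by Wbar_1(q) = q/(1+q^2) and Wbar_k(q) = ((q^{2k-1} - q) Wbar_{k-1}(q) + q^{2k-1}) / (1+q^{2k}) for k > 1 admits the closed form: Wbar_k(q) = q^{2k-1}/(1+q^{2k}) + q^{2k-2} ((q^2;q^2)_{k-1} / (-q^2;q^2)_k) · sum over j from 0 to k−2 of ((-1)^{j+1} / q^j) · (-q^2;q^2)_{k-j-2} / (q^2;q^2)_{k-j-2}. -/

import Mathlib

open scoped BigOperators

/-- The finite q-Pochhammer symbol `(a; q)_N = ∏_{j=0}^{N-1} (1 - a q^j)`. -/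
noncomputable def qPoch (a q : ℂ) (N : ℕ) : ℂ := ∏ j ∈ Finset.range N, (1 - a * q ^ j)

/-- The infinite q-Pochhammer symbol `(a; q)_∞ = ∏_{j=0}^{∞} (1 - a q^j)`. -/
noncomputable def qPochInf (a q : ℂ) : ℂ := ∏' j : ℕ, (1 - a * q ^ j)

/-- An overpartition of `n`: a multiset of positive non-overlined parts together with a
finset of positive overlined parts (the overlined parts are distinct), with total sum `n`. -/
structure Overpartition (n : ℕ) where
  parts : Multiset ℕ
  overlined : Finset ℕ
  parts_pos : ∀ x ∈ parts, 0 < x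
  overlined_pos : ∀ x ∈ overlined, 0 < x
  sum_eq : parts.sum + ∑ x ∈ overlined, x = n

/-- `s` is the smallest non-overlined part of `π`, it appears exactly `k` times among the
non-overlined parts, and every overlined part is greater than `s`. -/
def SptbarCond (k : ℕ) {n : ℕ} (π : Overpartition n) (s : ℕ) : Prop :=
  s ∈ π.parts ∧ (∀ x ∈ π.parts, s ≤ x) ∧ π.parts.count s = k ∧ ∀ x ∈ π.overlined, s < x

/-- `SptbarCond` together with: every part other than `s` is incongruent to `s` modulo 2. -/
def SptbarOCond (k : ℕ) {n : ℕ} (π : Overpartition n) (s : ℕ) : Prop :=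
  SptbarCond k π s ∧ (∀ x ∈ π.parts, x ≠ s → x % 2 ≠ s % 2) ∧
    ∀ x ∈ π.overlined, x % 2 ≠ s % 2

/-- The number of parts of `π` that are greater than `s`. -/
def numGreater {n : ℕ} (π : Overpartition n) (s : ℕ) : ℕ :=
  (π.parts.filter (fun x => s < x)).card + π.overlined.card

/-- The total number of parts of the overpartition `π`. -/
def numParts {n : ℕ} (π : Overpartition n) : ℕ :=
  π.parts.card + π.overlined.card

/-- `sptbar k n`: the number of overpartitions of `n` whose smallest non-overlined part `s`
appears exactly `k` times and all of whose overlined parts are greater than `s`. -/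
noncomputable def sptbar (k n : ℕ) : ℕ :=
  Nat.card {π : Overpartition n // ∃ s, SptbarCond k π s}

/-- `sptbar' k n = a_e(k,n) - a_o(k,n)`. -/
noncomputable def sptbar' (k n : ℕ) : ℤ :=
  (Nat.card {π : Overpartition n // ∃ s, SptbarCond k π s ∧ Even (numGreater π s)} : ℤ) -
    (Nat.card {π : Overpartition n // ∃ s, SptbarCond k π s ∧ Odd (numGreater π s)} : ℤ)

/-- `sptbarO k n`: as `sptbar k n`, with all parts other than the smallest non-overlined part
incongruent to it modulo 2. -/
noncomputable def sptbarO (k n : ℕ) : ℕ :=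
  Nat.card {π : Overpartition n // ∃ s, SptbarOCond k π s}

/-- `sptbarO' k n = b_e(k,n) - b_o(k,n)`. -/
noncomputable def sptbarO' (k n : ℕ) : ℤ :=
  (Nat.card {π : Overpartition n // ∃ s, SptbarOCond k π s ∧ Even (numGreater π s)} : ℤ) -
    (Nat.card {π : Overpartition n // ∃ s, SptbarOCond k π s ∧ Odd (numGreater π s)} : ℤ)

/-- The number of overpartitions of `n` into even parts. -/
noncomputable def pbarE (n : ℕ) : ℕ :=
  Nat.card {π : Overpartition n // (∀ x ∈ π.parts, Even x) ∧ ∀ x ∈ π.overlined, Even x}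

/-- The number of overpartitions of `n` into odd parts with no non-overlined part equal to 1. -/
noncomputable def pbarOex (n : ℕ) : ℕ :=
  Nat.card {π : Overpartition n //
    (∀ x ∈ π.parts, Odd x) ∧ (∀ x ∈ π.overlined, Odd x) ∧ (1 : ℕ) ∉ π.parts}

/-- Among overpartitions of `n` into odd parts with no non-overlined 1's: the number of those
with an even number of parts minus the number of those with an odd number of parts. -/
noncomputable def pbarOex' (n : ℕ) : ℤ :=
  (Nat.card {π : Overpartition n // ((∀ x ∈ π.parts, Odd x) ∧ (∀ x ∈ π.overlined, Odd x) ∧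
      (1 : ℕ) ∉ π.parts) ∧ Even (numParts π)} : ℤ) -
    (Nat.card {π : Overpartition n // ((∀ x ∈ π.parts, Odd x) ∧ (∀ x ∈ π.overlined, Odd x) ∧
      (1 : ℕ) ∉ π.parts) ∧ Odd (numParts π)} : ℤ)

/-- `sptkd k n`: the number of partitions of `n` whose smallest part appears exactly `k`
times and all of whose remaining parts are distinct. -/
noncomputable def sptkd (k n : ℕ) : ℕ :=
  Nat.card {m : Multiset ℕ // (∀ x ∈ m, 0 < x) ∧ m.sum = n ∧
    ∃ s, s ∈ m ∧ (∀ x ∈ m, s ≤ x) ∧ m.count s = k ∧ ∀ x ∈ m, x ≠ s → m.count x = 1}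

/-- `Wbar q 1 = q/(1+q^2)` and
`Wbar q k = ((q^(2k-1) - q) * Wbar q (k-1) + q^(2k-1)) / (1 + q^(2k))` for `k > 1`. -/
noncomputable def Wbar (q : ℂ) : ℕ → ℂ
  | 0 => 0
  | 1 => q / (1 + q ^ 2)
  | (k + 2) => ((q ^ (2 * (k + 2) - 1) - q) * Wbar q (k + 1) + q ^ (2 * (k + 2) - 1)) /
      (1 + q ^ (2 * (k + 2)))

/-! Write `m = k - 1` and `S_m` for the sum. Splitting off its `j = 0` term gives
`S_{m+1} = -(-q²;q²)_m / (q²;q²)_m - S_m / q`, and together with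
`(q²;q²)_{m+1} = (q²;q²)_m (1 - q^{2m+2})` and `(-q²;q²)_{m+2} = (-q²;q²)_{m+1} (1 + q^{2m+4})`
this turns the defining recurrence of `Wbar` into a rational identity, so the closed form
follows by induction on `m`. For `|q| < 1` none of the denominators vanish. -/

open Finset

lemma qPoch_succ (a q : ℂ) (n : ℕ) : qPoch a q (n + 1) = qPoch a q n * (1 - a * q ^ n) :=
  prod_range_succ _ _

lemma one_sub_ne_zero_of_norm_lt_one {z : ℂ} (hz : ‖z‖ < 1) : 1 - z ≠ 0 := by
  rw [sub_ne_zero]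
  rintro rfl
  simp at hz

lemma one_add_pow_ne_zero {q : ℂ} (hq : ‖q‖ < 1) {n : ℕ} (hn : n ≠ 0) : 1 + q ^ n ≠ 0 := by
  rw [← sub_neg_eq_add]
  refine one_sub_ne_zero_of_norm_lt_one ?_
  rw [norm_neg, norm_pow]
  exact pow_lt_one₀ (norm_nonneg q) hq hn

lemma qPoch_ne_zero {a q : ℂ} (ha : ‖a‖ < 1) (hq : ‖q‖ ≤ 1) (n : ℕ) : qPoch a q n ≠ 0 :=
  prod_ne_zero_iff.2 fun j _ ↦ one_sub_ne_zero_of_norm_lt_one <| by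
    rw [norm_mul, norm_pow]
    exact (mul_le_of_le_one_right (norm_nonneg a) (pow_le_one₀ (norm_nonneg q) hq)).trans_lt ha

/-- The sum in the closed form of `Wbar q (m + 1)`. -/
noncomputable def WbarSum (q : ℂ) (m : ℕ) : ℂ :=
  ∑ j ∈ range m, (-1) ^ (j + 1) / q ^ j *
    (qPoch (-q ^ 2) (q ^ 2) (m - (j + 1)) / qPoch (q ^ 2) (q ^ 2) (m - (j + 1)))

lemma WbarSum_succ (q : ℂ) (m : ℕ) :
    WbarSum q (m + 1) =
      -(qPoch (-q ^ 2) (q ^ 2) m / qPoch (q ^ 2) (q ^ 2) m) - WbarSum q m / q := by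
  rw [WbarSum, sum_range_succ', WbarSum, sum_div, add_comm, sub_eq_add_neg, ← sum_neg_distrib]
  congr 1
  · simp
  · refine sum_congr rfl fun j _ ↦ ?_
    rw [Nat.add_sub_add_right, pow_succ, pow_succ]
    ring

lemma pow_mul_WbarSum_succ (q : ℂ) (m : ℕ) :
    q ^ (2 * m + 2) * WbarSum q (m + 1) =
      -(q ^ (2 * m + 2) * (qPoch (-q ^ 2) (q ^ 2) m / qPoch (q ^ 2) (q ^ 2) m)) -
        q ^ (2 * m + 1) * WbarSum q m := by
  rw [WbarSum_succ, div_eq_mul_inv (WbarSum q m)]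
  linear_combination -q ^ (2 * m) * WbarSum q m * mul_self_mul_inv q

lemma Wbar_add_two (q : ℂ) (m : ℕ) :
    Wbar q (m + 2) =
      ((q ^ (2 * m + 3) - q) * Wbar q (m + 1) + q ^ (2 * m + 3)) / (1 + q ^ (2 * m + 4)) := by
  simp only [Wbar, show 2 * (m + 2) = 2 * m + 4 by ring, show 2 * m + 4 - 1 = 2 * m + 3 by omega]

lemma Wbar_succ_eq {q : ℂ} (hq : ‖q‖ < 1) (m : ℕ) :
    Wbar q (m + 1) = q ^ (2 * m + 1) / (1 + q ^ (2 * m + 2)) +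
      q ^ (2 * m) * (qPoch (q ^ 2) (q ^ 2) m / qPoch (-q ^ 2) (q ^ 2) (m + 1)) * WbarSum q m := by
  have hq2 : ‖q ^ 2‖ < 1 := by
    simpa using pow_lt_one₀ (norm_nonneg q) hq two_ne_zero
  induction m with
  | zero => simp [Wbar, WbarSum]
  | succ m ih =>
    have hQ := qPoch_ne_zero hq2 hq2.le m
    have hP := qPoch_ne_zero (by rwa [norm_neg]) hq2.le m
    have h1 := one_add_pow_ne_zero hq (n := 2 * m + 2) (by omega)
    have h2 := one_add_pow_ne_zero hq (n := 2 * m + 4) (by omega)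
    rw [Wbar_add_two, ih, show 2 * (m + 1) = 2 * m + 2 by ring,
      mul_right_comm (q ^ (2 * m + 2)), pow_mul_WbarSum_succ, qPoch_succ (q ^ 2),
      qPoch_succ (-q ^ 2) _ (m + 1), qPoch_succ (-q ^ 2) _ m]
    -- write every power through `(q ^ 2) ^ m`, so that `h1` and `h2` match the denominators
    simp only [mul_add, pow_add, pow_mul, neg_mul, sub_neg_eq_add] at h1 h2 ⊢
    field_simp
    ring

theorem Wbar_closed_form_general (k : ℕ) (hk : 1 ≤ k) (q : ℂ) (hq : ‖q‖ < 1) :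
    Wbar q k = q ^ (2 * k - 1) / (1 + q ^ (2 * k)) +
      q ^ (2 * k - 2) * (qPoch (q ^ 2) (q ^ 2) (k - 1) / qPoch (-q ^ 2) (q ^ 2) k) *
        ∑ j ∈ Finset.range (k - 1), ((-1 : ℂ) ^ (j + 1) / q ^ j) *
          (qPoch (-q ^ 2) (q ^ 2) (k - j - 2) / qPoch (q ^ 2) (q ^ 2) (k - j - 2)) := by
  obtain ⟨m, rfl⟩ : ∃ m, k = m + 1 := ⟨k - 1, by omega⟩
  rw [Wbar_succ_eq hq m, WbarSum, show 2 * (m + 1) - 1 = 2 * m + 1 by omega,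
    show 2 * (m + 1) - 2 = 2 * m by omega, show 2 * (m + 1) = 2 * m + 2 by ring, Nat.add_sub_cancel]
  congr 2
  refine sum_congr rfl fun j hj ↦ ?_
  rw [show m + 1 - j - 2 = m - (j + 1) by omega]

/-- Theorem 2.5 (second part): closed form for `Wbar q k`. -/
theorem Wbar_closed_form (k : ℕ) (hk : 1 ≤ k) (q : ℂ) (hq : ‖q‖ < 1)
    (hq0 : q ≠ 0) :
    Wbar q k = q ^ (2 * k - 1) / (1 + q ^ (2 * k)) +
      q ^ (2 * k - 2) * (qPoch (q ^ 2) (q ^ 2) (k - 1) / qPoch (-q ^ 2) (q ^ 2) k) *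
        ∑ j ∈ Finset.range (k - 1), ((-1 : ℂ) ^ (j + 1) / q ^ j) *
          (qPoch (-q ^ 2) (q ^ 2) (k - j - 2) / qPoch (q ^ 2) (q ^ 2) (k - j - 2)) :=
  Wbar_closed_form_general k hk q hq
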